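/- arXiv:1509.01301 — 2 statements merged into one kernel-verified Lean document; each statement's English description precedes it below -/
import Mathlib

section
/- A friendly partially oriented complete graph P can be completed to a locally transitive tournament if and only if no directed triangle of P is contained in the in-neighbourhood or the out-neighbourhood of any vertex of P. -/
/-- An oriented graph: an asymmetric (hence irreflexive) arc relation. -/
def IsOrientedGraph {V : Type*} (A : V → V → Prop) : Prop :=
  ∀ u v : V, A u v → ¬ A v u

/-- A tournament: an oriented graph with an arc between any two distinct vertices. -/
def IsTournament {V : Type*} (A : V → V → Prop) : Prop :=
  IsOrientedGraph A ∧ ∀ u v : V, u ≠ v → A u v ∨ A v u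

/-- A local tournament: every out-neighbourhood and every in-neighbourhood
induces a tournament. -/
def IsLocalTournament {V : Type*} (A : V → V → Prop) : Prop :=
  IsOrientedGraph A ∧
  (∀ v x y : V, A v x → A v y → x ≠ y → A x y ∨ A y x) ∧
  (∀ v x y : V, A x v → A y v → x ≠ y → A x y ∨ A y x)

/-- Local transitivity: the arc relation is transitive when restricted to the
out-neighbourhood of any vertex and to the in-neighbourhood of any vertex
(so these neighbourhoods induce transitive, i.e. triangle-free, subtournaments). -/
def IsLocallyTransitive {V : Type*} (A : V → V → Prop) : Prop :=
  (∀ v x y z : V, A v x → A v y → A v z → A x y → A y z → A x z) ∧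
  (∀ v x y z : V, A x v → A y v → A z v → A x y → A y z → A x z)

/-- A directed cycle of `A` all of whose vertices lie in `S`. -/
def HasCycleIn {V : Type*} (A : V → V → Prop) (S : Set V) : Prop :=
  ∃ (n : ℕ) (f : ZMod n → V), 2 ≤ n ∧ Function.Injective f ∧
    (∀ i, f i ∈ S) ∧ ∀ i : ZMod n, A (f i) (f (i + 1))

/-- A directed cycle somewhere in `A`. -/
def HasDirectedCycle {V : Type*} (A : V → V → Prop) : Prop :=
  HasCycleIn A Set.univ

/-- A partially oriented graph (pog): a symmetric loopless edge relation `E`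
together with an asymmetric arc relation `A`, no pair of vertices being joined
by both an edge and an arc. -/
def IsPog {V : Type*} (E A : V → V → Prop) : Prop :=
  (∀ u v : V, E u v → E v u) ∧ (∀ v : V, ¬ E v v) ∧ IsOrientedGraph A ∧
  (∀ u v : V, E u v → ¬ A u v ∧ ¬ A v u)

/-- `D` is a completion of the pog `(E, A)`: it keeps every arc of `A`,
orients every edge of `E` (in exactly one direction), and contains nothing else. -/
def IsCompletion {V : Type*} (E A D : V → V → Prop) : Prop :=
  IsOrientedGraph D ∧
  (∀ u v : V, A u v → D u v) ∧
  (∀ u v : V, E u v → D u v ∨ D v u) ∧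
  (∀ u v : V, D u v → A u v ∨ E u v)

/-- `T` is obtained from the oriented graph `A` by adding arcs between
non-adjacent pairs only (no arc of `A` is reversed), the result being a
tournament.  This is exactly a completion of the partially oriented complete
graph `A^c` to a tournament. -/
def CompletesToTournament {V : Type*} (A T : V → V → Prop) : Prop :=
  (∀ u v : V, A u v → T u v) ∧ (∀ u v : V, T u v → ¬ A v u) ∧ IsTournament T

/-- A round ordering of the arc relation `A`: a cyclic ordering (a bijection
from `ZMod n`) in which the out-neighbours of each vertex appear consecutively
immediately after it and its in-neighbours consecutively immediately before it. -/
def IsRoundOrdering {V : Type*} (A : V → V → Prop) {n : ℕ} (f : ZMod n → V) : Prop :=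
  Function.Bijective f ∧
  (∀ i j : ZMod n, A (f i) (f j) ↔ 1 ≤ (j - i).val ∧ (j - i).val ≤ {u | A (f i) u}.ncard) ∧
  (∀ i j : ZMod n, A (f j) (f i) ↔ 1 ≤ (i - j).val ∧ (i - j).val ≤ {u | A u (f i)}.ncard)

/-- The cyclic ordering given by `f : ZMod n → V` is excellent for the arc
relation `A`: there is no pair of arcs `(f i, f j)`, `(f s, f t)` whose vertices
occur in the cyclic order `f i, f t, f s, f j` (positions measured from `i`;
the degenerate cases `i = t` and `s = j` are allowed). -/
def IsExcellent {V : Type*} (A : V → V → Prop) {n : ℕ} (f : ZMod n → V) : Prop :=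
  ¬ ∃ i j s t : ZMod n, A (f i) (f j) ∧ A (f s) (f t) ∧
      (t - i).val ≤ (s - i).val ∧ (s - i).val ≤ (j - i).val

/-- The vertex set of the auxiliary graph `G⁺`: ordered pairs `(u,v)` with
`uv` an edge of `G`. -/
abbrev EdgePair {V : Type*} (G : SimpleGraph V) := {p : V × V // G.Adj p.1 p.2}

/-- The adjacency rule of the auxiliary graph `G⁺`. -/
def auxRel {V : Type*} (G : SimpleGraph V) (x y : EdgePair G) : Prop :=
  (x.1.1 = y.1.1 ∧ ¬ G.Adj x.1.2 y.1.2) ∨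
  (¬ G.Adj x.1.1 y.1.1 ∧ x.1.2 = y.1.2) ∨
  (x.1.1 = y.1.2 ∧ x.1.2 = y.1.1)

/-- The auxiliary graph `G⁺` of a graph `G`. -/
def auxGraph {V : Type*} (G : SimpleGraph V) : SimpleGraph (EdgePair G) :=
  SimpleGraph.fromRel (auxRel G)

/-- An orientation of a graph `G`: an asymmetric choice of exactly one
direction for each edge of `G`. -/
def IsOrientation {V : Type*} (G : SimpleGraph V) (D : V → V → Prop) : Prop :=
  (∀ u v : V, D u v → G.Adj u v) ∧ (∀ u v : V, D u v → ¬ D v u) ∧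
  (∀ u v : V, G.Adj u v → D u v ∨ D v u)

/-- The arcs `A` of a partial orientation of `G` are consentaneous: no two arcs
correspond to vertices of `G⁺` at odd distance, and for vertices of `G⁺` at even
distance (in the same component) either both corresponding arcs are present or
neither is. -/
def Consentaneous {V : Type*} (G : SimpleGraph V) (A : V → V → Prop) : Prop :=
  (¬ ∃ x y : EdgePair G, A x.1.1 x.1.2 ∧ A y.1.1 y.1.2 ∧ Odd ((auxGraph G).dist x y)) ∧
  (∀ x y : EdgePair G, (auxGraph G).Reachable x y → Even ((auxGraph G).dist x y) →
    (A x.1.1 x.1.2 ↔ A y.1.1 y.1.2))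

/-- The edge `uv` of the underlying graph is oriented in the partial orientation `A`. -/
def EdgeOriented {V : Type*} (A : V → V → Prop) (u v : V) : Prop := A u v ∨ A v u

/-- `P = (G, A)` has no bad triple: no triangle of `G` whose three edges lie in
three different connected components of `G⁺` and exactly two of whose edges are
oriented. -/
def NoBadTriple {V : Type*} (G : SimpleGraph V) (A : V → V → Prop) : Prop :=
  ¬ ∃ (x y z : V) (hxy : G.Adj x y) (hyz : G.Adj y z) (hzx : G.Adj z x),
    ¬ (auxGraph G).Reachable ⟨(x, y), hxy⟩ ⟨(y, z), hyz⟩ ∧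
    ¬ (auxGraph G).Reachable ⟨(y, z), hyz⟩ ⟨(z, x), hzx⟩ ∧
    ¬ (auxGraph G).Reachable ⟨(x, y), hxy⟩ ⟨(z, x), hzx⟩ ∧
    ((EdgeOriented A x y ∧ EdgeOriented A y z ∧ ¬ EdgeOriented A z x) ∨
     (EdgeOriented A x y ∧ ¬ EdgeOriented A y z ∧ EdgeOriented A z x) ∨
     (¬ EdgeOriented A x y ∧ EdgeOriented A y z ∧ EdgeOriented A z x))

/-!
Necessity is immediate: the out- and in-neighbourhoods of a vertex in a locally transitive
tournament are transitive, so they contain no directed triangle.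

For sufficiency, on a complete graph the auxiliary graph `G⁺` only joins `(u, v)` to `(v, u)`, so
the absence of bad triples says that the oriented edges of `P` form vertex-disjoint cliques, and
the triangle condition makes `A` locally transitive. Such an `A` is realised by points `θ v` on the
circle `K/ℤ`, with `u → v` exactly when `θ v` lies strictly less than half a turn ahead of `θ u`:
the vertices are placed one at a time, each just before the first of its out-neighbours or half a
turn before the first of its in-neighbours, and then nudged into general position. The circular
tournament of `θ` extends `A` and is locally transitive.
-/

section AuxGraphTop

variable {V : Type*}

lemma auxGraph_top_adj {x y : EdgePair (⊤ : SimpleGraph V)}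
    (h : (auxGraph (⊤ : SimpleGraph V)).Adj x y) : x.1.1 = y.1.2 ∧ x.1.2 = y.1.1 := by
  obtain ⟨⟨x₁, x₂⟩, hx⟩ := x
  obtain ⟨⟨y₁, y₂⟩, hy⟩ := y
  simp only [auxGraph, auxRel, SimpleGraph.fromRel_adj, SimpleGraph.top_adj, ne_eq,
    Subtype.mk.injEq, Prod.mk.injEq, not_not] at h ⊢
  grind

lemma auxGraph_top_reachable {a b c d : V} {hab : (⊤ : SimpleGraph V).Adj a b}
    {hcd : (⊤ : SimpleGraph V).Adj c d}
    (h : (auxGraph (⊤ : SimpleGraph V)).Reachable ⟨(a, b), hab⟩ ⟨(c, d), hcd⟩) :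
    (a = c ∧ b = d) ∨ (a = d ∧ b = c) := by
  suffices ∀ x y : EdgePair (⊤ : SimpleGraph V), (auxGraph ⊤).Reachable x y →
      x = y ∨ (x.1.1 = y.1.2 ∧ x.1.2 = y.1.1) by
    simpa using this _ _ h
  rintro x y ⟨w⟩
  induction w with
  | nil => exact .inl rfl
  | cons hadj _ ih =>
    have hs := auxGraph_top_adj hadj
    rcases ih with rfl | ⟨h₁, h₂⟩
    · exact .inr hs
    · exact .inl (Subtype.ext (Prod.ext (hs.1.trans h₂) (hs.2.trans h₁)))

end AuxGraphTop

lemma Finset.exists_source {α : Type*} (R : α → α → Prop) (p : α → Prop) (s : Finset α)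
    (hne : ∃ x ∈ s, p x) (htot : ∀ x y, p x → p y → x ≠ y → R x y ∨ R y x)
    (htrans : ∀ x y z, p x → p y → p z → R x y → R y z → R x z) :
    ∃ r ∈ s, p r ∧ ∀ x ∈ s, p x → x = r ∨ R r x := by
  classical
  induction s using Finset.induction_on with
  | empty => simp at hne
  | insert b s _ ih =>
    by_cases hs : ∃ x ∈ s, p x
    · obtain ⟨r, hrs, hr, hrsrc⟩ := ih hs
      by_cases hbr : p b ∧ R b r
      · refine ⟨b, mem_insert_self b s, hbr.1, fun x hx hpx => ?_⟩
        rcases mem_insert.1 hx with rfl | hx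
        · exact .inl rfl
        rcases hrsrc x hx hpx with rfl | hrx
        exacts [.inr hbr.2, .inr (htrans b r x hbr.1 hr hpx hbr.2 hrx)]
      · refine ⟨r, mem_insert_of_mem hrs, hr, fun x hx hpx => ?_⟩
        rcases mem_insert.1 hx with rfl | hx
        · by_cases hxr : x = r
          · exact .inl hxr
          · exact (htot x r hpx hr hxr).elim (fun h => absurd ⟨hpx, h⟩ hbr) .inr
        · exact hrsrc x hx hpx
    · obtain ⟨x, hx, hpx⟩ := hne
      rcases mem_insert.1 hx with rfl | hx
      · exact ⟨x, mem_insert_self x s, hpx, fun y hy hpy =>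
          .inl ((mem_insert.1 hy).resolve_right fun hy => hs ⟨y, hy, hpy⟩)⟩
      · exact absurd ⟨x, hx, hpx⟩ hs

/-- An oriented graph whose underlying graph is a disjoint union of cliques. -/
def IsClusterOriented {V : Type*} (A : V → V → Prop) : Prop :=
  IsOrientedGraph A ∧
    ∀ u m w : V, u ≠ w → EdgeOriented A u m → EdgeOriented A m w → EdgeOriented A u w

section Cluster

variable {V : Type*} {A : V → V → Prop}

lemma IsOrientedGraph.ne_of_arc_arc (hA : IsOrientedGraph A) {a u w : V} (hau : A a u)
    (hwa : A w a) : u ≠ w := by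
  rintro rfl
  exact hA a u hau hwa

lemma NoBadTriple.isClusterOriented_top (hnbt : NoBadTriple (⊤ : SimpleGraph V) A)
    (hA : IsOrientedGraph A) : IsClusterOriented A := by
  refine ⟨hA, fun u m w huw hum hmw => ?_⟩
  by_contra huw'
  have hne : ∀ {x y}, EdgeOriented A x y → x ≠ y := by
    rintro x y (h | h) rfl <;> exact hA x x h h
  refine hnbt ⟨u, m, w, (hne hum), (hne hmw), huw.symm, ?_, ?_, ?_, .inl ⟨hum, hmw, ?_⟩⟩
  · intro h
    rcases auxGraph_top_reachable h with ⟨h₁, -⟩ | ⟨h₁, -⟩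
    exacts [hne hum h₁, huw h₁]
  · intro h
    rcases auxGraph_top_reachable h with ⟨h₁, -⟩ | ⟨h₁, -⟩
    exacts [hne hmw h₁, hne hum h₁.symm]
  · intro h
    rcases auxGraph_top_reachable h with ⟨h₁, -⟩ | ⟨-, h₂⟩
    exacts [huw h₁, hne hmw h₂]
  · exact fun h => huw' (Or.symm h)

lemma IsClusterOriented.arc_of_not_arc (hA : IsClusterOriented A) {u m w : V}
    (hum : EdgeOriented A u m) (hmw : EdgeOriented A m w) (huw : u ≠ w) (h : ¬ A w u) :
    A u w :=
  (hA.2 u m w huw hum hmw).resolve_right h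

lemma IsClusterOriented.isLocallyTransitive (hA : IsClusterOriented A)
    (h : ¬ ∃ v x y z : V, A x y ∧ A y z ∧ A z x ∧
        ((A v x ∧ A v y ∧ A v z) ∨ (A x v ∧ A y v ∧ A z v))) :
    IsLocallyTransitive A := by
  have hxz : ∀ {x y z}, A x y → A y z → x ≠ z := fun hxy hyz => hA.1.ne_of_arc_arc hyz hxy |>.symm
  constructor
  · intro v x y z hvx hvy hvz hxy hyz
    refine hA.arc_of_not_arc (.inr hvx) (.inl hvz) (hxz hxy hyz) fun hzx => h ?_
    exact ⟨v, x, y, z, hxy, hyz, hzx, .inl ⟨hvx, hvy, hvz⟩⟩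
  · intro v x y z hxv hyv hzv hxy hyz
    refine hA.arc_of_not_arc (.inl hxv) (.inr hzv) (hxz hxy hyz) fun hzx => h ?_
    exact ⟨v, x, y, z, hxy, hyz, hzx, .inr ⟨hxv, hyv, hzv⟩⟩

-- `u₁`, `u₂` are the sources of the out- and in-neighbourhood of `a`, and `w`, `x` witness that
-- neither can serve as the cut of `exists_cut`.
lemma IsClusterOriented.false_of_crossing (hA : IsClusterOriented A) (hlt : IsLocallyTransitive A)
    {a u₁ u₂ w x : V} (hau₁ : A a u₁) (hu₂a : A u₂ a) (hwa : A w a) (hax : A a x)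
    (hu₁w : A u₁ w) (hu₂x : A u₂ x) (hu₁x : x = u₁ ∨ A u₁ x) (hu₂w : w = u₂ ∨ A u₂ w) : False := by
  rcases hA.2 u₁ a u₂ (hA.1.ne_of_arc_arc hau₁ hu₂a) (.inr hau₁) (.inr hu₂a) with h₁₂ | h₂₁
  · have hwx : A w x := by
      rcases hu₂w with rfl | hu₂w
      exacts [hu₂x, hlt.1 u₂ w a x hu₂w hu₂a hu₂x hwa hax]
    have hu₁x : A u₁ x := hu₁x.resolve_left (by rintro rfl; exact hA.1 _ _ h₁₂ hu₂x)
    exact hA.1 a u₁ hau₁ (hlt.2 x u₁ w a hu₁x hwx hax hu₁w hwa)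
  · have hu₂w : A u₂ w := hu₂w.resolve_left (by rintro rfl; exact hA.1 _ _ h₂₁ hu₁w)
    exact hA.1 a u₁ hau₁ (hlt.1 u₂ u₁ w a h₂₁ hu₂w hu₂a hu₁w hwa)

lemma IsClusterOriented.exists_cut (hA : IsClusterOriented A) (hlt : IsLocallyTransitive A)
    (a : V) (s : Finset V) :
    (∀ x ∈ s, ¬ A a x ∧ ¬ A x a) ∨ ∃ r ∈ s,
      ((∀ x ∈ s, A a x → x = r ∨ A r x) ∧ ∀ x ∈ s, A x a → A x r) ∨
      ((∀ x ∈ s, A a x → A x r) ∧ ∀ x ∈ s, A x a → x = r ∨ A r x) := by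
  have hsrcOut (hP : ∃ x ∈ s, A a x) := s.exists_source A (A a) hP
    (fun x y hx hy hxy => hA.2 x a y hxy (.inr hx) (.inl hy))
    (fun x y z hx hy hz => hlt.1 a x y z hx hy hz)
  have hsrcIn (hN : ∃ x ∈ s, A x a) := s.exists_source A (A · a) hN
    (fun x y hx hy hxy => hA.2 x a y hxy (.inl hx) (.inr hy))
    (fun x y z hx hy hz => hlt.2 a x y z hx hy hz)
  by_cases hP : ∃ x ∈ s, A a x
  · obtain ⟨u₁, hu₁s, hau₁, hu₁⟩ := hsrcOut hP
    by_cases hB : ∀ x ∈ s, A x a → A x u₁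
    · exact .inr ⟨u₁, hu₁s, .inl ⟨hu₁, hB⟩⟩
    push Not at hB
    obtain ⟨w, hws, hwa, hwu₁⟩ := hB
    obtain ⟨u₂, hu₂s, hu₂a, hu₂⟩ := hsrcIn ⟨w, hws, hwa⟩
    refine .inr ⟨u₂, hu₂s, .inr ⟨fun x hxs hax => by_contra fun hxu₂ => ?_, hu₂⟩⟩
    exact hA.false_of_crossing hlt hau₁ hu₂a hwa hax
      (hA.arc_of_not_arc (.inr hau₁) (.inr hwa) (hA.1.ne_of_arc_arc hau₁ hwa) hwu₁)
      (hA.arc_of_not_arc (.inl hu₂a) (.inl hax) (hA.1.ne_of_arc_arc hax hu₂a).symm hxu₂)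
      (hu₁ x hxs hax) (hu₂ w hws hwa)
  · by_cases hN : ∃ x ∈ s, A x a
    · obtain ⟨u₂, hu₂s, -, hu₂⟩ := hsrcIn hN
      exact .inr ⟨u₂, hu₂s, .inr ⟨fun x hxs hax => absurd ⟨x, hxs, hax⟩ hP, hu₂⟩⟩
    · push Not at hP hN
      exact .inl fun x hx => ⟨hP x hx, hN x hx⟩

end Cluster

section Circle

variable {K : Type*} [Field K] [LinearOrder K] [IsStrictOrderedRing K] [FloorRing K]

lemma Int.fract_neg_mem_Ioo_iff (t : K) :
    Int.fract (-t) ∈ Set.Ioo 0 (1 / 2) ↔ Int.fract t ∈ Set.Ioo (1 / 2) 1 := by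
  rcases eq_or_ne (Int.fract t) 0 with h | h
  · have h' : Int.fract (-t) = 0 := by
      rw [Int.fract_eq_iff] at h ⊢
      obtain ⟨-, -, z, hz⟩ := h
      exact ⟨le_rfl, one_pos, -z, by push_cast; linarith⟩
    simp [h, h']
  · rw [Int.fract_neg h]
    constructor <;> rintro ⟨h₁, h₂⟩ <;> constructor <;> linarith [Int.fract_lt_one t]

lemma Int.fract_sub_half_lt_half_iff (t : K) :
    Int.fract (t - 1 / 2) < 1 / 2 ↔ 1 / 2 ≤ Int.fract t := by
  have hf := Int.fract_nonneg t
  have hf' := Int.fract_lt_one t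
  rcases lt_or_ge (Int.fract t) (1 / 2) with h | h
  · have : Int.fract (t - 1 / 2) = Int.fract t + 1 / 2 := by
      rw [Int.fract_eq_iff]
      exact ⟨by linarith, by linarith, ⌊t⌋ - 1, by push_cast; linarith [Int.self_sub_fract t]⟩
    constructor <;> intro <;> linarith
  · have : Int.fract (t - 1 / 2) = Int.fract t - 1 / 2 := by
      rw [Int.fract_eq_iff]
      exact ⟨by linarith, by linarith, ⌊t⌋, by linarith [Int.self_sub_fract t]⟩
    constructor <;> intro <;> linarith

lemma Int.fract_sub_mem_Ioo_iff {a b : K} (ha : Int.fract a < 1 / 2) (hb : Int.fract b < 1 / 2) :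
    Int.fract (b - a) ∈ Set.Ioo 0 (1 / 2) ↔ Int.fract a < Int.fract b := by
  have hfa := Int.fract_nonneg a
  have hfb := Int.fract_nonneg b
  rcases lt_or_ge (Int.fract a) (Int.fract b) with h | h
  · have : Int.fract (b - a) = Int.fract b - Int.fract a := by
      rw [Int.fract_eq_iff]
      exact ⟨by linarith, by linarith, ⌊b⌋ - ⌊a⌋,
        by push_cast; linarith [Int.self_sub_fract a, Int.self_sub_fract b]⟩
    simp only [this, Set.mem_Ioo, h, iff_true]
    constructor <;> linarith
  have hba : Int.fract (b - a) = 0 ∨ 1 / 2 < Int.fract (b - a) := by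
    rcases h.lt_or_eq with h | h
    · have : Int.fract (b - a) = Int.fract b - Int.fract a + 1 :=
        Int.fract_eq_iff.2 ⟨by linarith, by linarith, ⌊b⌋ - ⌊a⌋ - 1,
          by push_cast; linarith [Int.self_sub_fract a, Int.self_sub_fract b]⟩
      exact .inr (by linarith)
    · exact .inl (Int.fract_eq_iff.2 ⟨le_rfl, one_pos, ⌊b⌋ - ⌊a⌋,
        by push_cast; linarith [Int.self_sub_fract a, Int.self_sub_fract b]⟩)
  simp only [Set.mem_Ioo, not_lt.2 h, iff_false, not_and, not_lt]
  intro
  rcases hba with hba | hba <;> linarith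

lemma Int.fract_add_of_lt_one {t ε : K} (hε : 0 ≤ ε) (h : Int.fract t + ε < 1) :
    Int.fract (t + ε) = Int.fract t + ε := by
  rw [Int.fract_eq_iff]
  exact ⟨by linarith [Int.fract_nonneg t], h, ⌊t⌋, by linarith [Int.self_sub_fract t]⟩

lemma Finset.exists_pos_forall_lt {ι : Type*} (s : Finset ι) {g : ι → K}
    (hg : ∀ i ∈ s, 0 < g i) : ∃ ε > 0, ∀ i ∈ s, ε < g i := by
  rcases s.eq_empty_or_nonempty with rfl | hs
  · exact ⟨1, one_pos, by simp⟩
  obtain ⟨i, hi, hmin⟩ := s.exists_min_image g hs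
  exact ⟨g i / 2, half_pos (hg i hi), fun j hj => (half_lt_self (hg i hi)).trans_le (hmin j hj)⟩

lemma exists_generic_shift {ι : Type*} (s : Finset ι) (g : ι → K) (c : K) :
    ∃ p : K, ∀ x ∈ s,
      (Int.fract (g x - c) < 1 / 2 → Int.fract (g x - p) ∈ Set.Ioo 0 (1 / 2)) ∧
      (1 / 2 ≤ Int.fract (g x - c) → Int.fract (g x - p) ∈ Set.Ioo (1 / 2) 1) := by
  set f := fun x => Int.fract (g x - c)
  obtain ⟨ε, hε, hεf⟩ := s.exists_pos_forall_lt
    (g := fun x => if f x < 1 / 2 then 1 / 2 - f x else 1 - f x) fun x _ => by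
      have := Int.fract_lt_one (g x - c)
      split_ifs with h <;> simp only [f] at h ⊢ <;> linarith
  refine ⟨c - ε, fun x hx => ?_⟩
  have hεx := hεf x hx
  have hf := Int.fract_nonneg (g x - c)
  have hshift : Int.fract (g x - (c - ε)) = f x + ε := by
    rw [show g x - (c - ε) = g x - c + ε by ring]
    refine Int.fract_add_of_lt_one hε.le ?_
    split_ifs at hεx <;> simp only [f] at * <;> linarith
  rw [hshift]
  constructor <;> intro h
  · rw [if_pos h] at hεx
    constructor <;> linarith
  · rw [if_neg (not_lt.2 h)] at hεx
    constructor <;> linarith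

end Circle

section CircularTournament

variable {K : Type*} [Field K] [LinearOrder K] [FloorRing K] {V : Type*}

/-- The circular tournament of points `θ v` on the circle `K/ℤ`: `u → v` when `θ v` is strictly
less than half a turn ahead of `θ u`. -/
def CircularTournament (θ : V → K) (u v : V) : Prop :=
  Int.fract (θ v - θ u) ∈ Set.Ioo 0 (1 / 2)

def IsCircularRepOn (A : V → V → Prop) (θ : V → K) (s : Finset V) : Prop :=
  ∀ u ∈ s, ∀ v ∈ s, (A u v → CircularTournament θ u v) ∧
    (u ≠ v → CircularTournament θ u v ∨ CircularTournament θ v u)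

variable {A : V → V → Prop} {θ : V → K} {s : Finset V}

lemma IsCircularRepOn.update [DecidableEq V] (hθ : IsCircularRepOn A θ s) {a : V} (ha : a ∉ s)
    (p : K) : IsCircularRepOn A (Function.update θ a p) s := by
  intro u hu v hv
  simpa only [CircularTournament, Function.update_of_ne (ne_of_mem_of_not_mem hu ha),
    Function.update_of_ne (ne_of_mem_of_not_mem hv ha)] using hθ u hu v hv

lemma IsCircularRepOn.extend [DecidableEq V] (hθ : IsCircularRepOn A θ s) (hA : IsOrientedGraph A)
    {a : V} (ha : ∀ x ∈ s, (A a x → CircularTournament θ a x) ∧ (A x a → CircularTournament θ x a) ∧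
      (CircularTournament θ a x ∨ CircularTournament θ x a)) :
    IsCircularRepOn A θ (insert a s) := by
  intro u hu v hv
  rw [Finset.mem_insert] at hu hv
  rcases hu with rfl | hu' <;> rcases hv with rfl | hv'
  · exact ⟨fun h => absurd h (hA _ _ h), fun h => absurd rfl h⟩
  · exact ⟨(ha v hv').1, fun _ => (ha v hv').2.2⟩
  · exact ⟨(ha u hu').2.1, fun _ => (ha u hu').2.2.symm⟩
  · exact hθ u hu' v hv'

section

variable [IsStrictOrderedRing K]

lemma circularTournament_swap_iff (θ : V → K) (u v : V) :
    CircularTournament θ v u ↔ Int.fract (θ v - θ u) ∈ Set.Ioo (1 / 2) 1 := by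
  rw [CircularTournament, ← neg_sub, Int.fract_neg_mem_Ioo_iff]

lemma isOrientedGraph_circularTournament (θ : V → K) :
    IsOrientedGraph (CircularTournament θ) := fun u v huv hvu => by
  rw [circularTournament_swap_iff] at hvu
  exact (huv.2.trans hvu.1).false

lemma circularTournament_iff_of_out {θ : V → K} {p x y : V} (hx : CircularTournament θ p x)
    (hy : CircularTournament θ p y) :
    CircularTournament θ x y ↔ Int.fract (θ x - θ p) < Int.fract (θ y - θ p) := by
  rw [CircularTournament, show θ y - θ x = (θ y - θ p) - (θ x - θ p) by ring]
  exact Int.fract_sub_mem_Ioo_iff hx.2 hy.2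

lemma circularTournament_iff_of_in {θ : V → K} {p x y : V} (hx : CircularTournament θ x p)
    (hy : CircularTournament θ y p) :
    CircularTournament θ x y ↔ Int.fract (θ p - θ y) < Int.fract (θ p - θ x) := by
  rw [CircularTournament, show θ y - θ x = (θ p - θ x) - (θ p - θ y) by ring]
  exact Int.fract_sub_mem_Ioo_iff hy.2 hx.2

lemma isLocallyTransitive_circularTournament (θ : V → K) :
    IsLocallyTransitive (CircularTournament θ) := by
  constructor
  · intro p x y z hx hy hz hxy hyz
    rw [circularTournament_iff_of_out hx hy] at hxy
    rw [circularTournament_iff_of_out hy hz] at hyz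
    exact (circularTournament_iff_of_out hx hz).2 (hxy.trans hyz)
  · intro p x y z hx hy hz hxy hyz
    rw [circularTournament_iff_of_in hx hy] at hxy
    rw [circularTournament_iff_of_in hy hz] at hyz
    exact (circularTournament_iff_of_in hx hz).2 (hyz.trans hxy)

lemma IsCircularRepOn.completesToTournament [Fintype V] (hθ : IsCircularRepOn A θ Finset.univ) :
    CompletesToTournament A (CircularTournament θ) :=
  ⟨fun u v huv => (hθ u (by simp) v (by simp)).1 huv,
    fun u v huv hvu => isOrientedGraph_circularTournament θ u v huv
      ((hθ v (by simp) u (by simp)).1 hvu),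
    isOrientedGraph_circularTournament θ, fun u v huv => (hθ u (by simp) v (by simp)).2 huv⟩

lemma IsCircularRepOn.exists_cut_point (hθ : IsCircularRepOn A θ s) {a : V}
    (hcut : (∀ x ∈ s, ¬ A a x ∧ ¬ A x a) ∨ ∃ r ∈ s,
      ((∀ x ∈ s, A a x → x = r ∨ A r x) ∧ ∀ x ∈ s, A x a → A x r) ∨
      ((∀ x ∈ s, A a x → A x r) ∧ ∀ x ∈ s, A x a → x = r ∨ A r x)) :
    ∃ c : K, ∀ x ∈ s, (A a x → Int.fract (θ x - c) < 1 / 2) ∧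
      (A x a → 1 / 2 ≤ Int.fract (θ x - c)) := by
  rcases hcut with hnone | ⟨r, hr, ⟨hout, hin⟩ | ⟨hout, hin⟩⟩
  · exact ⟨0, fun x hx => ⟨fun h => absurd h (hnone x hx).1, fun h => absurd h (hnone x hx).2⟩⟩
  · refine ⟨θ r, fun x hx => ⟨fun hax => ?_, fun hxa => ?_⟩⟩
    · rcases hout x hx hax with rfl | hrx
      · simp
      · exact ((hθ r hr x hx).1 hrx).2
    · exact ((circularTournament_swap_iff θ r x).1 ((hθ x hx r hr).1 (hin x hx hxa))).1.le
  · refine ⟨θ r + 1 / 2, fun x hx => ⟨fun hax => ?_, fun hxa => ?_⟩⟩ <;>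
      rw [show θ x - (θ r + 1 / 2) = θ x - θ r - 1 / 2 by ring]
    · rw [Int.fract_sub_half_lt_half_iff]
      exact ((circularTournament_swap_iff θ r x).1 ((hθ x hx r hr).1 (hout x hx hax))).1.le
    · rw [← not_lt, Int.fract_sub_half_lt_half_iff, not_le]
      rcases hin x hx hxa with rfl | hrx
      · simp
      · exact ((hθ r hr x hx).1 hrx).2

lemma IsCircularRepOn.exists_insert [DecidableEq V] (hA : IsClusterOriented A)
    (hlt : IsLocallyTransitive A) (hθ : IsCircularRepOn A θ s) {a : V} (ha : a ∉ s) :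
    ∃ θ' : V → K, IsCircularRepOn A θ' (insert a s) := by
  obtain ⟨c, hc⟩ := hθ.exists_cut_point (hA.exists_cut hlt a s)
  obtain ⟨p, hp⟩ := exists_generic_shift s θ c
  refine ⟨Function.update θ a p, (hθ.update ha p).extend hA.1 fun x hx => ?_⟩
  have hpx : CircularTournament (Function.update θ a p) a x ↔
      Int.fract (θ x - p) ∈ Set.Ioo 0 (1 / 2) := by
    rw [CircularTournament, Function.update_self,
      Function.update_of_ne (ne_of_mem_of_not_mem hx ha)]
  have hxp : CircularTournament (Function.update θ a p) x a ↔
      Int.fract (θ x - p) ∈ Set.Ioo (1 / 2) 1 := by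
    rw [circularTournament_swap_iff, Function.update_self,
      Function.update_of_ne (ne_of_mem_of_not_mem hx ha)]
  rw [hpx, hxp]
  rcases lt_or_ge (Int.fract (θ x - c)) (1 / 2) with h | h
  · have := (hp x hx).1 h
    exact ⟨fun _ => this, fun hxa => absurd ((hc x hx).2 hxa) (not_le.2 h), .inl this⟩
  · have := (hp x hx).2 h
    exact ⟨fun hax => absurd ((hc x hx).1 hax) (not_lt.2 h), fun _ => this, .inr this⟩

lemma IsClusterOriented.exists_isCircularRepOn (hA : IsClusterOriented A)
    (hlt : IsLocallyTransitive A) (s : Finset V) : ∃ θ : V → K, IsCircularRepOn A θ s := by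
  classical
  induction s using Finset.induction_on with
  | empty => exact ⟨0, by simp [IsCircularRepOn]⟩
  | insert a s ha ih =>
    obtain ⟨θ, hθ⟩ := ih
    exact hθ.exists_insert hA hlt ha

end

end CircularTournament

lemma not_exists_cyclic_triangle_of_le {V : Type*} {A T : V → V → Prop}
    (hAT : ∀ u v, A u v → T u v) (hT : IsOrientedGraph T) (hlt : IsLocallyTransitive T) :
    ¬ ∃ v x y z : V, A x y ∧ A y z ∧ A z x ∧
        ((A v x ∧ A v y ∧ A v z) ∨ (A x v ∧ A y v ∧ A z v)) := by
  rintro ⟨v, x, y, z, hxy, hyz, hzx, ⟨hvx, hvy, hvz⟩ | ⟨hxv, hyv, hzv⟩⟩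
  · exact hT x z (hlt.1 v x y z (hAT _ _ hvx) (hAT _ _ hvy) (hAT _ _ hvz) (hAT _ _ hxy)
      (hAT _ _ hyz)) (hAT _ _ hzx)
  · exact hT x z (hlt.2 v x y z (hAT _ _ hxv) (hAT _ _ hyv) (hAT _ _ hzv) (hAT _ _ hxy)
      (hAT _ _ hyz)) (hAT _ _ hzx)

theorem stmt_14_general {V : Type*} [Fintype V] (A : V → V → Prop)
    (hA : IsOrientedGraph A)
    (hnbt : NoBadTriple (⊤ : SimpleGraph V) A) :
    (∃ T : V → V → Prop, CompletesToTournament A T ∧ IsLocallyTransitive T) ↔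
    ¬ ∃ v x y z : V, A x y ∧ A y z ∧ A z x ∧
        ((A v x ∧ A v y ∧ A v z) ∨ (A x v ∧ A y v ∧ A z v)) := by
  refine ⟨fun ⟨T, hT, hlt⟩ => not_exists_cyclic_triangle_of_le hT.1 hT.2.2.1 hlt, fun h => ?_⟩
  have hcl := hnbt.isClusterOriented_top hA
  obtain ⟨θ, hθ⟩ := hcl.exists_isCircularRepOn (K := ℚ) (hcl.isLocallyTransitive h) Finset.univ
  exact ⟨CircularTournament θ, hθ.completesToTournament, isLocallyTransitive_circularTournament θ⟩

/-- A friendly partially oriented complete graph (arc set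
`A`, underlying graph the complete graph `⊤`) can be completed to a locally
transitive tournament iff no directed triangle of its arcs is contained in the
in-neighbourhood or the out-neighbourhood of any vertex. -/
theorem stmt_14 {V : Type*} [Fintype V] (A : V → V → Prop)
    (hA : IsOrientedGraph A)
    (hcons : Consentaneous (⊤ : SimpleGraph V) A)
    (hnbt : NoBadTriple (⊤ : SimpleGraph V) A) :
    (∃ T : V → V → Prop, CompletesToTournament A T ∧ IsLocallyTransitive T) ↔
    ¬ ∃ v x y z : V, A x y ∧ A y z ∧ A z x ∧
        ((A v x ∧ A v y ∧ A v z) ∨ (A x v ∧ A y v ∧ A z v)) :=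
  stmt_14_general A hA hnbt
end

section
/- In a locally transitive local tournament D whose underlying graph is connected and whose complement restricted to a connected component C_i (of the complement graph) is bipartite with parts S_i and T_i, the set S_i induces a transitive tournament in D, and by symmetry so does T_i. -/
/-!
Fix a directed triangle `a → b → c → a`. A vertex `y` non-adjacent to all of `a, b, c` passes
this property on to each of its neighbours: a neighbour `y'` of `y` adjacent to `a` would, by
local tournament-ness, have to dominate (or be dominated by) all three of `a, b, c`, putting a
directed triangle into one neighbourhood of `y'`. Connectivity therefore forbids such `y`, so a
vertex `z` non-adjacent to `a` satisfies `b → z → c`.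

If transitivity failed on `S`, there would be a triangle `u → w → x → u` in `S`. Walking from
`u` to `w` in the complement, the vertices `z` of `S` keep closing a triangle `z → w → x → z`,
while those of `T` satisfy `w → z → x`; reaching `w` itself is absurd.
-/

open SimpleGraph

section

variable {V : Type*} {A : V → V → Prop}

lemma IsLocalTournament.flip (hA : IsLocalTournament A) : IsLocalTournament (flip A) :=
  ⟨fun u v h h' => hA.1 v u h h',
    fun v x y hx hy hne => (hA.2.2 v x y hx hy hne).symm,
    fun v x y hx hy hne => (hA.2.1 v x y hx hy hne).symm⟩

lemma IsLocallyTransitive.flip (hlt : IsLocallyTransitive A) : IsLocallyTransitive (flip A) :=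
  ⟨fun v x y z hx hy hz hxy hyz => hlt.2 v z y x hz hy hx hyz hxy,
    fun v x y z hx hy hz hxy hyz => hlt.1 v z y x hz hy hx hyz hxy⟩

lemma IsLocalTournament.not_arc_to_triangle_of_adj_isolated
    (hA : IsLocalTournament A) (hlt : IsLocallyTransitive A)
    {a b c y y' : V} (hab : A a b) (hbc : A b c) (hca : A c a)
    (hya : ¬(A y a ∨ A a y)) (hyb : ¬(A y b ∨ A b y)) (hyc : ¬(A y c ∨ A c y))
    (hyy' : A y y' ∨ A y' y) : ¬A y' a := by
  intro hy'a
  obtain ⟨hasymm, hout, hin⟩ := hA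
  have hya' : y ≠ a := by rintro rfl; exact hyb (Or.inl hab)
  have hyb' : y ≠ b := by rintro rfl; exact hya (Or.inr hab)
  have hyc' : y ≠ c := by rintro rfl; exact hyb (Or.inr hbc)
  have hyy : A y y' := hyy'.resolve_right fun h => hya (hout y' y a h hy'a hya')
  have hy'c : A y' c := by
    refine (hin a y' c hy'a hca ?_).resolve_right fun h => hyc (hin y' c y h hyy hyc'.symm).symm
    rintro rfl; exact hyc (Or.inl hyy)
  have hy'b : A y' b := by
    refine (hin c y' b hy'c hbc ?_).resolve_right fun h => hyb (hin y' b y h hyy hyb'.symm).symm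
    rintro rfl; exact hyb (Or.inl hyy)
  exact hasymm c a hca (hlt.1 y' a b c hy'a hy'b hy'c hab hbc)

lemma IsLocalTournament.not_adj_of_isolated_from_triangle
    (hA : IsLocalTournament A) (hlt : IsLocallyTransitive A)
    {a b c y y' : V} (hab : A a b) (hbc : A b c) (hca : A c a)
    (hya : ¬(A y a ∨ A a y)) (hyb : ¬(A y b ∨ A b y)) (hyc : ¬(A y c ∨ A c y))
    (hyy' : A y y' ∨ A y' y) : ¬(A y' a ∨ A a y') := by
  rintro (h | h)
  · exact hA.not_arc_to_triangle_of_adj_isolated hlt hab hbc hca hya hyb hyc hyy' h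
  · exact hA.flip.not_arc_to_triangle_of_adj_isolated hlt.flip hca hbc hab
      (fun h => hya h.symm) (fun h => hyc h.symm) (fun h => hyb h.symm) hyy'.symm h

lemma IsLocalTournament.not_isolated_from_triangle
    (hA : IsLocalTournament A) (hlt : IsLocallyTransitive A)
    (hconn : (fromRel A).Connected) {a b c y : V} (hab : A a b) (hbc : A b c) (hca : A c a)
    (hya : ¬(A y a ∨ A a y)) (hyb : ¬(A y b ∨ A b y)) (hyc : ¬(A y c ∨ A c y)) :
    False := by
  obtain ⟨p⟩ := hconn.preconnected y a
  induction p generalizing b c with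
  | nil => exact hyb (Or.inl hab)
  | cons hadj _ ih =>
    have hyy' := ((fromRel_adj A _ _).mp hadj).2
    exact ih hab hbc hca (hA.not_adj_of_isolated_from_triangle hlt hab hbc hca hya hyb hyc hyy')
      (hA.not_adj_of_isolated_from_triangle hlt hbc hca hab hyb hyc hya hyy')
      (hA.not_adj_of_isolated_from_triangle hlt hca hab hbc hyc hya hyb hyy')

lemma IsLocalTournament.between_of_not_adj_triangle
    (hA : IsLocalTournament A) (hlt : IsLocallyTransitive A)
    (hconn : (fromRel A).Connected) {a b c z : V} (hab : A a b) (hbc : A b c) (hca : A c a)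
    (hza : z ≠ a) (hnadj : ¬(A z a ∨ A a z)) : A b z ∧ A z c := by
  have hout := hA.2.1
  have hin := hA.2.2
  have hzb : A z b ∨ A b z := by
    by_contra hzb
    refine hA.not_isolated_from_triangle hlt hconn hab hbc hca hnadj hzb ?_
    rintro (h | h)
    · refine hzb (hin c z b h hbc ?_)
      rintro rfl; exact hnadj (Or.inr hab)
    · exact hnadj (hout c z a h hca hza)
  have hbz : A b z := hzb.resolve_left fun h => hnadj (hin b z a h hab hza)
  refine ⟨hbz, (hout b z c hbz hbc ?_).resolve_right fun h => hnadj (hout c z a h hca hza)⟩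
  rintro rfl; exact hnadj (Or.inl hca)

lemma IsLocalTournament.triangle_of_not_adj_between (hA : IsLocalTournament A)
    {w x z z' : V} (hwz : A w z) (hzx : A z x) (hne : z' ≠ z) (hnadj : ¬(A z z' ∨ A z' z))
    (hz'w : A z' w ∨ A w z') (hz'x : A z' x ∨ A x z') : A z' w ∧ A x z' :=
  ⟨hz'w.resolve_right fun h => hnadj (hA.2.1 w z z' hwz h hne.symm),
    hz'x.resolve_left fun h => hnadj (hA.2.2 x z z' hzx h hne.symm)⟩

lemma compl_fromRel_adj_iff {u v : V} :
    (fromRel A)ᶜ.Adj u v ↔ u ≠ v ∧ ¬(A u v ∨ A v u) := by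
  rw [compl_adj, fromRel_adj]
  tauto

lemma IsLocalTournament.trans_of_alternating
    (hA : IsLocalTournament A) (hlt : IsLocallyTransitive A)
    (hconn : (fromRel A).Connected) {S : Set V}
    (hS : ∀ p ∈ S, ∀ q ∈ S, p ≠ q → A p q ∨ A q p) {u w x : V}
    (halt : ∀ z z', (fromRel A)ᶜ.Reachable u z → (fromRel A)ᶜ.Adj z z' →
      (z ∈ S ↔ z' ∉ S))
    (hreach : (fromRel A)ᶜ.Reachable u w) (hu : u ∈ S) (hw : w ∈ S) (hx : x ∈ S)
    (huw : A u w) (hwx : A w x) : A u x := by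
  by_contra hux
  have hxu : A x u := by
    refine (hS u hu x hx ?_).resolve_left hux
    rintro rfl; exact hA.1 u w huw hwx
  have key : ∀ z, (fromRel A)ᶜ.Reachable u z →
      (z ∈ S ∧ A z w ∧ A x z) ∨ (z ∉ S ∧ A w z ∧ A z x) := by
    intro z hz
    rw [reachable_iff_reflTransGen] at hz
    induction hz with
    | refl => exact Or.inl ⟨hu, huw, hxu⟩
    | @tail z z' hz hadj ih =>
      replace hz := (reachable_iff_reflTransGen u z).mpr hz
      obtain ⟨hne, hnadj⟩ := compl_fromRel_adj_iff.mp hadj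
      rcases ih with ⟨hzS, hzw, hxz⟩ | ⟨hzS, hwz, hzx⟩
      · exact Or.inr ⟨(halt z z' hz hadj).mp hzS,
          hA.between_of_not_adj_triangle hlt hconn hzw hwx hxz hne.symm fun h => hnadj h.symm⟩
      · have hz'S : z' ∈ S := not_not.mp fun h => hzS ((halt z z' hz hadj).mpr h)
        have hz'w : z' ≠ w := by rintro rfl; exact hnadj (Or.inr hwz)
        have hz'x : z' ≠ x := by rintro rfl; exact hnadj (Or.inl hzx)
        exact Or.inl ⟨hz'S, hA.triangle_of_not_adj_between hwz hzx hne.symm hnadj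
          (hS z' hz'S w hw hz'w) (hS z' hz'S x hx hz'x)⟩
  rcases key w hreach with ⟨-, h, -⟩ | ⟨-, h, -⟩ <;> exact hA.1 w w h h

lemma IsLocalTournament.isTransitiveTournament_of_part
    (hA : IsLocalTournament A) (hlt : IsLocallyTransitive A)
    (hconn : (fromRel A).Connected) {K S T : Set V} {v₀ : V}
    (hK : K = {u | (fromRel A)ᶜ.Reachable v₀ u})
    (hcover : S ∪ T = K) (hdisj : Disjoint S T)
    (hbip : ∀ u ∈ K, ∀ w ∈ K, (fromRel A)ᶜ.Adj u w →
      ((u ∈ S ∧ w ∈ T) ∨ (u ∈ T ∧ w ∈ S))) :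
    (∀ u ∈ S, ∀ w ∈ S, u ≠ w → A u w ∨ A w u) ∧
      (∀ u ∈ S, ∀ w ∈ S, ∀ x ∈ S, A u w → A w x → A u x) := by
  subst hK
  have hSK : S ⊆ {u | (fromRel A)ᶜ.Reachable v₀ u} := hcover ▸ Set.subset_union_left
  have halt : ∀ z z', (fromRel A)ᶜ.Reachable v₀ z → (fromRel A)ᶜ.Adj z z' →
      (z ∈ S ↔ z' ∉ S) := by
    intro z z' hz hadj
    rcases hbip z hz z' (hz.trans hadj.reachable) hadj with ⟨hzS, hz'T⟩ | ⟨hzT, hz'S⟩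
    · exact iff_of_true hzS (Set.disjoint_right.mp hdisj hz'T)
    · exact iff_of_false (Set.disjoint_right.mp hdisj hzT) (not_not.mpr hz'S)
  have hS : ∀ u ∈ S, ∀ w ∈ S, u ≠ w → A u w ∨ A w u := fun u hu w hw hne =>
    not_not.mp fun hnadj =>
      (halt u w (hSK hu) (compl_fromRel_adj_iff.mpr ⟨hne, hnadj⟩)).mp hu hw
  refine ⟨hS, fun u hu w hw x hx huw hwx => ?_⟩
  exact hA.trans_of_alternating hlt hconn hS (fun z z' hz => halt z z' ((hSK hu).trans hz))
    ((hSK hu).symm.trans (hSK hw)) hu hw hx huw hwx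

end

theorem stmt_18_general {V : Type*} (A : V → V → Prop)
    (hA : IsLocalTournament A) (hlt : IsLocallyTransitive A)
    (hconn : (SimpleGraph.fromRel A).Connected)
    (K S T : Set V) (v₀ : V)
    (hK : K = {u | ((SimpleGraph.fromRel A)ᶜ).Reachable v₀ u})
    (hcover : S ∪ T = K) (hdisj : Disjoint S T)
    (hbip : ∀ u ∈ K, ∀ w ∈ K, ((SimpleGraph.fromRel A)ᶜ).Adj u w →
      ((u ∈ S ∧ w ∈ T) ∨ (u ∈ T ∧ w ∈ S))) :
    ((∀ u ∈ S, ∀ w ∈ S, u ≠ w → A u w ∨ A w u) ∧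
     (∀ u ∈ S, ∀ w ∈ S, ∀ x ∈ S, A u w → A w x → A u x)) ∧
    ((∀ u ∈ T, ∀ w ∈ T, u ≠ w → A u w ∨ A w u) ∧
     (∀ u ∈ T, ∀ w ∈ T, ∀ x ∈ T, A u w → A w x → A u x)) :=
  ⟨hA.isTransitiveTournament_of_part hlt hconn hK hcover hdisj hbip,
    hA.isTransitiveTournament_of_part hlt hconn hK (Set.union_comm T S ▸ hcover) hdisj.symm
      fun u hu w hw h => (hbip u hu w hw h).symm⟩

/-- Let `A` be a locally transitive local tournament whose
underlying graph is connected, let `K` be (the vertex set of) a connected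
component of the complement of the underlying graph, and let `(S, T)` be a
bipartition of `K` (every complement-edge inside `K` goes between `S` and
`T`).  Then `S` induces a transitive tournament in `A`, and so does `T`. -/
theorem stmt_18 {V : Type*} [Fintype V] (A : V → V → Prop)
    (hA : IsLocalTournament A) (hlt : IsLocallyTransitive A)
    (hconn : (SimpleGraph.fromRel A).Connected)
    (K S T : Set V) (v₀ : V)
    (hK : K = {u | ((SimpleGraph.fromRel A)ᶜ).Reachable v₀ u})
    (hcover : S ∪ T = K) (hdisj : Disjoint S T)
    (hbip : ∀ u ∈ K, ∀ w ∈ K, ((SimpleGraph.fromRel A)ᶜ).Adj u w →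
      ((u ∈ S ∧ w ∈ T) ∨ (u ∈ T ∧ w ∈ S))) :
    ((∀ u ∈ S, ∀ w ∈ S, u ≠ w → A u w ∨ A w u) ∧
     (∀ u ∈ S, ∀ w ∈ S, ∀ x ∈ S, A u w → A w x → A u x)) ∧
    ((∀ u ∈ T, ∀ w ∈ T, u ≠ w → A u w ∨ A w u) ∧
     (∀ u ∈ T, ∀ w ∈ T, ∀ x ∈ T, A u w → A w x → A u x)) :=
  stmt_18_general A hA hlt hconn K S T v₀ hK hcover hdisj hbip
end
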